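/- arXiv:1303.3777 — 4 statements merged into one kernel-verified Lean document; each statement's English description precedes it below -/
import Mathlib

section
/- Reducibility via attractors: if X ⊆ W_{G,σ} is contained in σ's winning region of a Muller game G, and U = Attr(G, X, σ), then W_{G,σ} = U ∪ W_{G[V \ U], σ}, where G[V \ U] is the induced subgame on V \ U. -/
/-- `T` is a trap for the player whose vertex set is `Q`. -/
def IsTrap {V : Type*} (E : V → V → Prop) (Q T : Set V) : Prop :=
  (∀ v ∈ T, v ∈ Q → ∀ w, E v w → w ∈ T) ∧
  (∀ v ∈ T, v ∉ Q → ∃ w ∈ T, E v w)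

/-- Edge relation of the induced subgame `G[S]`. -/
def restrictE {V : Type*} (E : V → V → Prop) (S : Set V) : V → V → Prop :=
  fun v w => E v w ∧ v ∈ S ∧ w ∈ S

/-- Attractor for the player with vertex set `P`. -/
inductive AttrP {V : Type*} (E : V → V → Prop) (P X : Set V) : V → Prop
  | base {v} : v ∈ X → AttrP E P X v
  | step {v w} : v ∈ P → E v w → AttrP E P X w → AttrP E P X v
  | forced {v} : v ∉ P → (∀ w, E v w → AttrP E P X w) → AttrP E P X v

def attr {V : Type*} (E : V → V → Prop) (P X : Set V) : Set V :=
  {v | AttrP E P X v}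

/-- An infinite play: each step follows an edge. -/
def IsPlay {V : Type*} (E : V → V → Prop) (f : ℕ → V) : Prop :=
  ∀ n, E (f n) (f (n + 1))

/-- A strategy for the player with vertex set `P` maps a finite history plus
the current vertex to the next vertex; `f` is consistent with `s` if at every
`P`-vertex the next vertex is the one prescribed by `s`. -/
def Consistent {V : Type*} (P : Set V) (s : List V → V → V) (f : ℕ → V) : Prop :=
  ∀ n, f n ∈ P → f (n + 1) = s (List.ofFn (fun i : Fin n => f i)) (f n)

/-- The set of vertices occurring infinitely often in the play `f`. -/
def infSet {V : Type*} (f : ℕ → V) : Set V := {v | ∀ n, ∃ m, n ≤ m ∧ f m = v}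

/-- A strategy is valid if, at any `P`-vertex with at least one outgoing edge,
it prescribes moving along an edge. -/
def ValidStrat {V : Type*} (E : V → V → Prop) (P : Set V)
    (s : List V → V → V) : Prop :=
  ∀ (h : List V) (u : V), u ∈ P → (∃ w, E u w) → E u (s h u)

/-- The strategy `s` wins for the player with vertex set `P` and winning family
`W` (of infinity sets) from every play starting at `v` consistent with `s`. -/
def WinsFrom {V : Type*} (E : V → V → Prop) (P : Set V) (W : Set (Set V))
    (s : List V → V → V) (v : V) : Prop :=
  ∀ f : ℕ → V, f 0 = v → IsPlay E f → Consistent P s f → infSet f ∈ W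

/-- The winning region of the player with vertex set `P` and winning condition
`W` in the Muller game with edges `E`. -/
def winRegion {V : Type*} (E : V → V → Prop) (P : Set V) (W : Set (Set V)) :
    Set V :=
  {v | ∃ s : List V → V → V, ValidStrat E P s ∧ WinsFrom E P W s v}


/-!
Two facts combine. First, a strategy that wins every play which never visits a set `T` of
winning vertices becomes a winning strategy once it switches, at the first visit to `T`, to a
winning strategy of the vertex visited: a finite prefix does not change the infinity set.
Switching after one move shows, by induction on the attractor, that `attr E P X` is winning.
Second, the complement `S` of the attractor is a σ-trap, so σ never leaves `S` on its own: a
winning strategy of `G` from a vertex of `S` is a winning strategy of `G[S]`, and a play that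
follows a winning strategy of `G[S]` is either won inside `S` or driven by the opponent into
the attractor, where σ switches.
-/

section

variable {V : Type*} {E : V → V → Prop} {P : Set V} {W : Set (Set V)}

lemma infSet_comp_add (f : ℕ → V) (a : ℕ) : infSet (fun k => f (a + k)) = infSet f := by
  ext v
  constructor
  · intro h n
    obtain ⟨m, hm, rfl⟩ := h n
    exact ⟨a + m, by omega, rfl⟩
  · intro h n
    obtain ⟨m, hm, rfl⟩ := h (a + n)
    exact ⟨m - a, by omega, by simp only [show a + (m - a) = m by omega]⟩

open Classical in
noncomputable def switchStrat (T : Set V) (s : List V → V → V) (σ : V → List V → V → V) :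
    List V → V → V :=
  fun h u => match (h ++ [u]).dropWhile (fun x => x ∉ T) with
    | [] => s h u
    | w :: r => σ w (w :: r).dropLast u

lemma validStrat_switchStrat {T : Set V} {s : List V → V → V} {σ : V → List V → V → V}
    (hs : ∀ h u, u ∈ P → u ∉ T → (∃ w, E u w) → E u (s h u))
    (hσ : ∀ w ∈ T, ValidStrat E P (σ w)) :
    ValidStrat E P (switchStrat T s σ) := by
  classical
  intro h u hu hex
  unfold switchStrat
  split
  · next hnil =>
    exact hs h u hu (by simpa using List.dropWhile_eq_nil_iff.1 hnil u (by simp)) hex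
  · next w r hcons =>
    have hw := List.head_dropWhile_not (fun x => decide (x ∉ T)) (l := h ++ [u])
      (by rw [hcons]; exact List.cons_ne_nil w r)
    simp only [hcons, List.head_cons, decide_eq_false_iff_not, not_not] at hw
    exact hσ w hw _ u hu hex

lemma switchStrat_of_forall_not_mem {T : Set V} {s : List V → V → V}
    {σ : V → List V → V → V} {h : List V} {u : V} (hh : ∀ x ∈ h, x ∉ T) (hu : u ∉ T) :
    switchStrat T s σ h u = s h u := by
  classical
  have hnil : (h ++ [u]).dropWhile (fun x => x ∉ T) = [] :=
    List.dropWhile_eq_nil_iff.2 (by simpa [or_imp, forall_and] using ⟨hh, hu⟩)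
  unfold switchStrat
  rw [hnil]

lemma switchStrat_ofFn {T : Set V} {s : List V → V → V} {σ : V → List V → V → V}
    {f : ℕ → V} {n : ℕ} (hpre : ∀ k < n, f k ∉ T) (hn : f n ∈ T) (m : ℕ) :
    switchStrat T s σ (List.ofFn fun i : Fin (n + m) => f i) (f (n + m)) =
      σ (f n) (List.ofFn fun i : Fin m => f (n + i)) (f (n + m)) := by
  classical
  have hsplit : (List.ofFn fun i : Fin (n + m) => f i) ++ [f (n + m)] =
      (List.ofFn fun i : Fin n => f i) ++ List.ofFn fun i : Fin (m + 1) => f (n + i) := by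
    rw [List.ofFn_add, List.append_assoc, List.ofFn_succ_last (n := m)]
    rfl
  have hdrop : ((List.ofFn fun i : Fin (n + m) => f i) ++ [f (n + m)]).dropWhile
      (fun x => x ∉ T) = f n :: List.ofFn fun i : Fin m => f (n + (i + 1)) := by
    rw [hsplit, List.dropWhile_append_of_pos, List.ofFn_succ, List.dropWhile_cons_of_neg]
    · rfl
    · simpa using hn
    · simp only [List.mem_ofFn, decide_eq_true_eq]
      rintro _ ⟨i, rfl⟩
      exact hpre i i.isLt
  have hlast : (f n :: List.ofFn fun i : Fin m => f (n + (i + 1))).dropLast =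
      List.ofFn fun i : Fin m => f (n + i) := by
    rw [show f n :: List.ofFn (fun i : Fin m => f (n + (i + 1))) =
        List.ofFn fun i : Fin (m + 1) => f (n + i) by rw [List.ofFn_succ]; rfl,
      List.ofFn_succ_last, List.dropLast_concat]
    rfl
  unfold switchStrat
  rw [hdrop]
  exact congrArg (σ (f n) · (f (n + m))) hlast

theorem mem_winRegion_of_win_or_reach {T : Set V} (hT : T ⊆ winRegion E P W) {v : V}
    {s : List V → V → V} (hs : ∀ h u, u ∈ P → u ∉ T → (∃ w, E u w) → E u (s h u))
    (hwin : ∀ f, f 0 = v → IsPlay E f → Consistent P s f → infSet f ∈ W ∨ ∃ n, f n ∈ T) :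
    v ∈ winRegion E P W := by
  classical
  have hchoice : ∀ w, ∃ σ, w ∈ T → ValidStrat E P σ ∧ WinsFrom E P W σ w := fun w =>
    if hw : w ∈ T then (hT hw).imp fun _ hσ _ => hσ else ⟨s, fun hw' => absurd hw' hw⟩
  choose σ hσ using hchoice
  refine ⟨switchStrat T s σ, validStrat_switchStrat hs fun w hw => (hσ w hw).1, ?_⟩
  intro f hf0 hplay hcons
  by_cases hreach : ∃ n, f n ∈ T
  · have hpre : ∀ k < Nat.find hreach, f k ∉ T := fun k hk => Nat.find_min hreach hk
    have hn := Nat.find_spec hreach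
    rw [← infSet_comp_add f (Nat.find hreach)]
    refine (hσ _ hn).2 _ rfl (fun k => hplay _) fun m hm => ?_
    rw [← add_assoc, hcons _ hm, switchStrat_ofFn hpre hn]
  · simp only [not_exists] at hreach
    have hcons_s : Consistent P s f := fun n hn => by
      rw [hcons n hn, switchStrat_of_forall_not_mem _ (hreach n)]
      simp only [List.mem_ofFn]
      rintro _ ⟨i, rfl⟩
      exact hreach i
    exact (hwin f hf0 hplay hcons_s).resolve_right (not_exists.2 hreach)

theorem mem_winRegion_of_forall_next_mem {v : V} {s : List V → V → V}
    (hs : ValidStrat E P s)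
    (hnext : ∀ f, f 0 = v → IsPlay E f → Consistent P s f → f 1 ∈ winRegion E P W) :
    v ∈ winRegion E P W :=
  mem_winRegion_of_win_or_reach subset_rfl (fun h u hu _ hex => hs h u hu hex)
    fun f hf0 hplay hcons => Or.inr ⟨1, hnext f hf0 hplay hcons⟩

theorem attr_subset_winRegion {X : Set V} (hXW : X ⊆ winRegion E P W) :
    attr E P X ⊆ winRegion E P W := by
  intro v hv
  classical
  have : Nonempty V := ⟨v⟩
  induction hv with
  | base hx => exact hXW hx
  | @step v w hvP hvw _ ih =>
    refine mem_winRegion_of_forall_next_mem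
      (s := fun _ => Function.update (fun u => Classical.epsilon (E u)) v w)
      (fun _ u _ hex => ?_) fun f hf0 _ hcons => ?_
    · rcases eq_or_ne u v with rfl | huv
      · simpa using hvw
      · simpa [huv] using Classical.epsilon_spec hex
    · simpa [hcons 0 (hf0 ▸ hvP), hf0] using ih
  | forced _ _ ih =>
    exact mem_winRegion_of_forall_next_mem (s := fun _ u => Classical.epsilon (E u))
      (fun _ _ _ hex => Classical.epsilon_spec hex)
      fun f hf0 hplay _ => ih _ (hf0 ▸ hplay 0)

theorem winRegion_inter_subset_restrictE {S : Set V}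
    (hS : ∀ u ∈ P, u ∈ S → ∀ w, E u w → w ∈ S) :
    winRegion E P W ∩ S ⊆ winRegion (restrictE E S) (P ∩ S) {A | A ∈ W ∧ A ⊆ S} := by
  rintro v ⟨⟨s, hvalid, hwins⟩, -⟩
  refine ⟨s, fun h u hu ⟨w, hw⟩ => ?_, fun f hf0 hplay hcons => ?_⟩
  · have hus : E u (s h u) := hvalid h u hu.1 ⟨w, hw.1⟩
    exact ⟨hus, hu.2, hS u hu.1 hu.2 _ hus⟩
  · have hfS : ∀ n, f n ∈ S := fun n => (hplay n).2.1
    refine ⟨hwins f hf0 (fun n => (hplay n).1) fun n hn => hcons n ⟨hn, hfS n⟩, ?_⟩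
    intro x hx
    obtain ⟨m, -, rfl⟩ := hx 0
    exact hfS m

theorem winRegion_restrictE_subset {S : Set V} (hS : ∀ u ∈ P, u ∈ S → ∀ w, E u w → w ∈ S)
    (hSc : Sᶜ ⊆ winRegion E P W) :
    winRegion (restrictE E S) (P ∩ S) {A | A ∈ W ∧ A ⊆ S} ⊆ winRegion E P W := by
  rintro v ⟨s, hvalid, hwins⟩
  refine mem_winRegion_of_win_or_reach hSc (s := s) (fun h u hu huS ⟨w, hw⟩ => ?_) ?_
  · have huS : u ∈ S := not_not.1 huS
    exact (hvalid h u ⟨hu, huS⟩ ⟨w, hw, huS, hS u hu huS w hw⟩).1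
  · intro f hf0 hplay hcons
    by_cases hstay : ∀ n, f n ∈ S
    · exact Or.inl (hwins f hf0 (fun n => ⟨hplay n, hstay n, hstay (n + 1)⟩)
        fun n hn => hcons n hn.1).1
    · exact Or.inr (not_forall.1 hstay)

end

theorem winRegion_attr_reduction_general {V : Type*}
    (E : V → V → Prop) (P : Set V) (W : Set (Set V))
    (X : Set V) (hXW : X ⊆ winRegion E P W) :
    winRegion E P W =
      attr E P X ∪
        winRegion (restrictE E (attr E P X)ᶜ) (P ∩ (attr E P X)ᶜ)
          {S | S ∈ W ∧ S ⊆ (attr E P X)ᶜ} := by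
  have htrap : ∀ u ∈ P, u ∈ (attr E P X)ᶜ → ∀ w, E u w → w ∈ (attr E P X)ᶜ :=
    fun _ hu huA _ huw hw => huA (AttrP.step hu huw hw)
  have hattr := attr_subset_winRegion hXW
  refine subset_antisymm (fun v hv => ?_) ?_
  · by_cases hvA : v ∈ attr E P X
    · exact Or.inl hvA
    · exact Or.inr (winRegion_inter_subset_restrictE htrap ⟨hv, hvA⟩)
  · exact Set.union_subset hattr
      (winRegion_restrictE_subset htrap (by rwa [compl_compl]))

/-- Reducibility via attractors: if `X ⊆ W_{G,σ}` is contained in σ's winning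
region of a Muller game `G` and `U = Attr(G, X, σ)`, then
`W_{G,σ} = U ∪ W_{G[V \ U], σ}`, where `G[V \ U]` is the induced subgame on
`V \ U` with winning condition restricted to subsets of `V \ U`. -/
theorem winRegion_attr_reduction {V : Type*} [Fintype V]
    (E : V → V → Prop) (hE : ∀ v, ∃ w, E v w) (P : Set V) (W : Set (Set V))
    (X : Set V) (hXW : X ⊆ winRegion E P W) :
    winRegion E P W =
      attr E P X ∪
        winRegion (restrictE E (attr E P X)ᶜ) (P ∩ (attr E P X)ᶜ)
          {S | S ∈ W ∧ S ⊆ (attr E P X)ᶜ} :=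
  winRegion_attr_reduction_general E P W X hXW
end

section
/- Restriction of trap-depth winning first moves to a trap: Let G be a Muller game. Suppose X is a valid first move for σ in the trap-depth game on G (i.e., X is a nonempty σ̄-trap with X ∈ R_σ) from which σ can guarantee a win in at most k rounds, and let A be a σ-trap in G with A ∩ X ≠ ∅. Then there exists Y ⊆ X ∩ A that is a valid first move for σ in the trap-depth game on G[A] from which σ can guarantee a win in at most k rounds. -/
/-- `WinTD E P R k S` says player σ (vertex set `P`, winning family `R`) can
guarantee winning the trap-depth game, moving first on the subgame induced by
`S`, within `k` rounds: σ picks a nonempty σ̄-trap `X` of `G[S]` with `X ∈ R`,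
and every possible reply `Y` (a nonempty σ-trap of `G[X]`) either satisfies
`Y ∈ R` (so it is not a legal reply for σ̄) or σ wins from `G[Y]` within `k-1`
rounds. -/
def WinTD {V : Type*} (E : V → V → Prop) (P : Set V) (R : Set (Set V)) :
    ℕ → Set V → Prop
  | 0, _ => False
  | k + 1, S => ∃ X : Set V, X.Nonempty ∧ X ⊆ S ∧
      IsTrap (restrictE E S) (Pᶜ ∩ S) X ∧ X ∈ R ∧
      ∀ Y : Set V, Y.Nonempty → Y ⊆ X → IsTrap (restrictE E X) (P ∩ X) Y →
        (Y ∈ R ∨ WinTD E P R k Y)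

/-- `X` is a valid first move for σ in the trap-depth game on `G[S]` from which
σ can guarantee a win in at most `k` rounds. -/
def FirstMoveWin {V : Type*} (E : V → V → Prop) (P : Set V) (R : Set (Set V))
    (k : ℕ) (S X : Set V) : Prop :=
  1 ≤ k ∧ X.Nonempty ∧ X ⊆ S ∧ IsTrap (restrictE E S) (Pᶜ ∩ S) X ∧ X ∈ R ∧
    ∀ Y : Set V, Y.Nonempty → Y ⊆ X → IsTrap (restrictE E X) (P ∩ X) Y →
      (Y ∈ R ∨ WinTD E P R (k - 1) Y)

/-!
Player σ̄ may answer `X` with the σ-trap `X ∩ A` of `G[X]`. If that answer lies in `R`, then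
`X ∩ A` is itself a winning first move in `G[A]`: it is a σ̄-trap of `G[A]`, and every σ-trap of
`G[X ∩ A]` is a σ-trap of `G[X]`, so it is answered as in `G`. Otherwise σ wins from `X ∩ A`
within `k - 1` rounds, and the first move of that win is a σ̄-trap of the σ̄-trap `X ∩ A` of
`G[A]`. Either way the remaining play is unchanged when the whole game is restricted to `A`.
-/

open Set

section Traps

variable {V : Type*} {E : V → V → Prop}

theorem restrictE_univ : restrictE E univ = E := by
  funext v w
  simp [restrictE]

theorem restrictE_restrictE {A S : Set V} (h : S ⊆ A) :
    restrictE (restrictE E A) S = restrictE E S := by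
  funext v w
  simp only [restrictE, eq_iff_iff]
  exact ⟨fun ⟨⟨hvw, _⟩, hv, hw⟩ => ⟨hvw, hv, hw⟩, fun ⟨hvw, hv, hw⟩ => ⟨⟨hvw, h hv, h hw⟩, hv, hw⟩⟩

namespace IsTrap

variable {Q S T : Set V}

theorem inter_iff (hT : T ⊆ S) : IsTrap E (Q ∩ S) T ↔ IsTrap E Q T := by
  unfold IsTrap
  refine and_congr (forall₂_congr fun v hv => ?_) (forall₂_congr fun v hv => ?_) <;>
    simp [hT hv]

theorem inter_restrictE {A X : Set V} (hA : IsTrap E Q A) (hX : IsTrap E Qᶜ X) :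
    IsTrap (restrictE E X) Q (X ∩ A) := by
  refine ⟨fun v ⟨hvX, hvA⟩ hvQ w ⟨hvw, _, hwX⟩ => ⟨hwX, hA.1 v hvA hvQ w hvw⟩, ?_⟩
  rintro v ⟨hvX, hvA⟩ hvQ
  obtain ⟨w, hwA, hvw⟩ := hA.2 v hvA hvQ
  have hwX : w ∈ X := hX.1 v hvX hvQ w hvw
  exact ⟨w, ⟨hwX, hwA⟩, hvw, hvX, hwX⟩

theorem of_restrictE (hS : IsTrap E Q S) (hT : IsTrap (restrictE E S) Q T) (hTS : T ⊆ S) :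
    IsTrap E Q T := by
  refine ⟨fun v hv hvQ w hvw => hT.1 v hv hvQ w ⟨hvw, hTS hv, hS.1 v (hTS hv) hvQ w hvw⟩, ?_⟩
  intro v hv hvQ
  obtain ⟨w, hw, hvw, -⟩ := hT.2 v hv hvQ
  exact ⟨w, hw, hvw⟩

end IsTrap

section TrapDepth

variable {P : Set V} {R : Set (Set V)}

theorem winTD_succ_iff {k : ℕ} {S : Set V} :
    WinTD E P R (k + 1) S ↔ ∃ X, FirstMoveWin E P R (k + 1) S X := by
  simp [WinTD, FirstMoveWin]

theorem winTD_succ_of_winTD : ∀ {m : ℕ} {S : Set V}, WinTD E P R m S → WinTD E P R (m + 1) S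
  | 0, _, h => h.elim
  | _ + 1, _, ⟨X, hX, hXS, hXtrap, hXR, hreply⟩ =>
    ⟨X, hX, hXS, hXtrap, hXR, fun Y hY hYX hYtrap =>
      (hreply Y hY hYX hYtrap).imp_right winTD_succ_of_winTD⟩

theorem winTD_monotone : Monotone (WinTD E P R) :=
  monotone_nat_of_le_succ fun _ _ => winTD_succ_of_winTD

theorem FirstMoveWin.of_subtrap {k m : ℕ} {A S Y : Set V}
    (hS : IsTrap (restrictE E A) Pᶜ S) (hSA : S ⊆ A) (hmk : m ≤ k)
    (h : FirstMoveWin E P R m S Y) : FirstMoveWin E P R k A Y := by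
  obtain ⟨hm, hY, hYS, hYtrap, hYR, hreply⟩ := h
  rw [IsTrap.inter_iff hYS, ← restrictE_restrictE hSA] at hYtrap
  refine ⟨hm.trans hmk, hY, hYS.trans hSA, ?_, hYR, fun Z hZ hZY hZtrap =>
    (hreply Z hZ hZY hZtrap).imp_right (winTD_monotone (by omega) Z)⟩
  exact (IsTrap.inter_iff (hYS.trans hSA)).2 (hS.of_restrictE hYtrap hYS)

variable {A : Set V}

theorem isTrap_restrictE_restrictE_compl {S T : Set V} (hSA : S ⊆ A) :
    IsTrap (restrictE (restrictE E A) S) ((P ∩ A)ᶜ ∩ S) T ↔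
      IsTrap (restrictE E S) (Pᶜ ∩ S) T := by
  rw [restrictE_restrictE hSA, compl_inter, union_inter_distrib_right,
    (disjoint_compl_left_iff_subset.2 hSA).inter_eq, union_empty]

theorem isTrap_restrictE_restrictE {S T : Set V} (hSA : S ⊆ A) :
    IsTrap (restrictE (restrictE E A) S) (P ∩ A ∩ S) T ↔ IsTrap (restrictE E S) (P ∩ S) T := by
  rw [restrictE_restrictE hSA, inter_assoc, inter_eq_right.2 hSA]

theorem FirstMoveWin.restrict_of_winTD {k : ℕ} {S X : Set V} (hSA : S ⊆ A)
    (hwin : ∀ Z ⊆ A, WinTD E P R (k - 1) Z →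
      WinTD (restrictE E A) (P ∩ A) {T | T ∈ R ∧ T ⊆ A} (k - 1) Z)
    (h : FirstMoveWin E P R k S X) :
    FirstMoveWin (restrictE E A) (P ∩ A) {T | T ∈ R ∧ T ⊆ A} k S X := by
  obtain ⟨hk, hX, hXS, hXtrap, hXR, hreply⟩ := h
  have hXA : X ⊆ A := hXS.trans hSA
  refine ⟨hk, hX, hXS, (isTrap_restrictE_restrictE_compl hSA).2 hXtrap, ⟨hXR, hXA⟩, ?_⟩
  intro Y hY hYX hYtrap
  rcases hreply Y hY hYX ((isTrap_restrictE_restrictE hXA).1 hYtrap) with hYR | hYwin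
  · exact Or.inl ⟨hYR, hYX.trans hXA⟩
  · exact Or.inr (hwin Y (hYX.trans hXA) hYwin)

theorem winTD_restrict :
    ∀ {m : ℕ} {S : Set V}, S ⊆ A → WinTD E P R m S →
      WinTD (restrictE E A) (P ∩ A) {T | T ∈ R ∧ T ⊆ A} m S
  | 0, _, _, h => h.elim
  | _ + 1, _, hSA, h => by
    obtain ⟨X, hX⟩ := winTD_succ_iff.1 h
    exact winTD_succ_iff.2 ⟨X, hX.restrict_of_winTD hSA fun _ hZA => winTD_restrict hZA⟩

theorem FirstMoveWin.restrict {k : ℕ} {S X : Set V} (hSA : S ⊆ A)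
    (h : FirstMoveWin E P R k S X) :
    FirstMoveWin (restrictE E A) (P ∩ A) {T | T ∈ R ∧ T ⊆ A} k S X :=
  h.restrict_of_winTD hSA fun _ hZA => winTD_restrict hZA

end TrapDepth

end Traps

theorem firstMove_restrict_to_trap_general {V : Type*}
    (E : V → V → Prop) (P : Set V) (R : Set (Set V))
    (k : ℕ) (X A : Set V)
    (hX : FirstMoveWin E P R k Set.univ X)
    (hA : IsTrap E P A) (hAX : (A ∩ X).Nonempty) :
    ∃ Y : Set V, Y ⊆ X ∩ A ∧
      FirstMoveWin (restrictE E A) (P ∩ A) {S | S ∈ R ∧ S ⊆ A} k A Y := by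
  suffices ∃ Y ⊆ X ∩ A, FirstMoveWin E P R k A Y from
    let ⟨Y, hYXA, hY⟩ := this; ⟨Y, hYXA, hY.restrict subset_rfl⟩
  obtain ⟨hk, -, -, hXtrap, -, hreply⟩ := hX
  rw [restrictE_univ, inter_univ] at hXtrap
  have hXA_X : IsTrap (restrictE E X) P (X ∩ A) := hA.inter_restrictE hXtrap
  have hXA_A : IsTrap (restrictE E A) Pᶜ (X ∩ A) := by
    rw [inter_comm]; exact hXtrap.inter_restrictE (by rwa [compl_compl])
  rcases hreply (X ∩ A) (by rwa [inter_comm]) inter_subset_left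
    ((IsTrap.inter_iff inter_subset_left).2 hXA_X) with hXAR | hXAwin
  · refine ⟨X ∩ A, subset_rfl, hk, by rwa [inter_comm], inter_subset_right,
      (IsTrap.inter_iff inter_subset_right).2 hXA_A, hXAR, fun Z hZ hZXA hZtrap => ?_⟩
    rw [IsTrap.inter_iff hZXA, ← restrictE_restrictE inter_subset_left] at hZtrap
    exact hreply Z hZ (hZXA.trans inter_subset_left)
      ((IsTrap.inter_iff (hZXA.trans inter_subset_left)).2 (hXA_X.of_restrictE hZtrap hZXA))
  · obtain ⟨j, hj⟩ : ∃ j, k - 1 = j + 1 :=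
      Nat.exists_eq_add_one.2 (Nat.pos_of_ne_zero fun h0 => by rw [h0] at hXAwin; exact hXAwin)
    rw [hj, winTD_succ_iff] at hXAwin
    obtain ⟨Y, hY⟩ := hXAwin
    exact ⟨Y, hY.2.2.1, hY.of_subtrap hXA_A inter_subset_right (by omega)⟩

/-- Restriction of trap-depth winning first moves to a trap: if `X` is a valid
first move for σ in the trap-depth game on `G` guaranteeing a win within `k`
rounds, and `A` is a σ-trap in `G` with `A ∩ X ≠ ∅`, then some `Y ⊆ X ∩ A` is a
valid first move for σ in the trap-depth game on `G[A]` (whose winning family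
is that of `G` restricted to subsets of `A`) guaranteeing a win within `k`
rounds. -/
theorem firstMove_restrict_to_trap {V : Type*} [Fintype V]
    (E : V → V → Prop) (hE : ∀ v, ∃ w, E v w) (P : Set V) (R : Set (Set V))
    (k : ℕ) (X A : Set V)
    (hX : FirstMoveWin E P R k Set.univ X)
    (hA : IsTrap E P A) (hAX : (A ∩ X).Nonempty) :
    ∃ Y : Set V, Y ⊆ X ∩ A ∧
      FirstMoveWin (restrictE E A) (P ∩ A) {S | S ∈ R ∧ S ⊆ A} k A Y :=
  firstMove_restrict_to_trap_general E P R k X A hX hA hAX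
end

section
/- In a parity game, for every set of target vertices T with λ > p(v) for all v ∈ V \ T, if V is good (every σ-trap of V has its maximum-priority vertices of parity σ) then S := GenAttr-style computation with a nice-with-traps algorithm satisfies: S = Attr(G, S, σ), and if V \ S ≠ ∅ then all maximum-priority vertices of V \ S belong to player σ. -/
/-- The λ-safe attractor for the player with vertex set `P` in a parity game
with priorities `p`: the least set containing `X`, closed under adding
`P`-vertices of priority `< lam` with some out-neighbor inside and opponent
vertices of priority `< lam` with all out-neighbors inside. -/
inductive SafeAttrP {V : Type*} (E : V → V → Prop) (P : Set V) (p : V → ℤ)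
    (lam : ℤ) (X : Set V) : V → Prop
  | base {v} : v ∈ X → SafeAttrP E P p lam X v
  | step {v w} : v ∈ P → p v < lam → E v w → SafeAttrP E P p lam X w →
      SafeAttrP E P p lam X v
  | forced {v} : v ∉ P → p v < lam → (∀ w, E v w → SafeAttrP E P p lam X w) →
      SafeAttrP E P p lam X v

def safeAttr {V : Type*} (E : V → V → Prop) (P : Set V) (p : V → ℤ)
    (lam : ℤ) (X : Set V) : Set V :=
  {v | SafeAttrP E P p lam X v}

/-- The vertices of `S` of maximum priority. -/
def maxSet {V : Type*} (p : V → ℤ) (S : Set V) : Set V :=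
  {v ∈ S | ∀ w ∈ S, p w ≤ p v}

/-!
Every vertex outside `T` has priority below `λ`, so the priority bound in the safe attractor
never binds: `S = SafeAttr(G, λ, T, σ)` is already closed under the ordinary σ-attractor
rules, i.e. `S = Attr(G, S, σ)`. Hence `V \ S` is the complement of a σ-attractor, so it is a
σ-trap, and goodness of `V` says its maximum-priority vertices belong to σ.
-/

section Attractor

variable {V : Type*} (E : V → V → Prop) (P : Set V)

theorem subset_attr (X : Set V) : X ⊆ attr E P X :=
  fun _ hv => AttrP.base hv

theorem isTrap_compl_attr (X : Set V) : IsTrap E P (attr E P X)ᶜ := by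
  refine ⟨fun v hv hvP w hvw hw => hv (AttrP.step hvP hvw hw), fun v hv hvP => ?_⟩
  by_contra! hstay
  exact hv (AttrP.forced hvP fun w hvw => by_contra fun hw => hstay w hw hvw)

theorem attr_safeAttr_eq (p : V → ℤ) {lam : ℤ} {T : Set V}
    (hlam : ∀ v, v ∉ T → p v < lam) :
    attr E P (safeAttr E P p lam T) = safeAttr E P p lam T := by
  refine Set.Subset.antisymm ?_ (subset_attr E P _)
  intro v hv
  induction hv with
  | base h => exact h
  | @step v w hvP hvw _ ih =>
    by_cases hT : v ∈ T
    · exact SafeAttrP.base hT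
    · exact SafeAttrP.step hvP (hlam v hT) hvw ih
  | @forced v hvP _ ih =>
    by_cases hT : v ∈ T
    · exact SafeAttrP.base hT
    · exact SafeAttrP.forced hvP (hlam v hT) ih

end Attractor

theorem genAttr_of_good_general {V : Type*}
    (E : V → V → Prop) (p : V → ℤ) (P : Set V)
    (hGood : ∀ Y : Set V, Y.Nonempty → IsTrap E P Y → maxSet p Y ⊆ P)
    (T : Set V) (lam : ℤ) (hlam : ∀ v, v ∉ T → p v < lam) :
    safeAttr E P p lam T = attr E P (safeAttr E P p lam T) ∧
    ((safeAttr E P p lam T)ᶜ.Nonempty →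
      maxSet p (safeAttr E P p lam T)ᶜ ⊆ P) := by
  have hclosed := attr_safeAttr_eq E P p hlam
  refine ⟨hclosed.symm, fun hne => hGood _ hne ?_⟩
  rw [← hclosed]
  exact isTrap_compl_attr E P _

/-- Suppose every nonempty σ-trap of `G` has all its maximum-priority vertices
of parity σ (i.e. `V` is good, with the auxiliary algorithm ParAlg always
returning `∅`, so that the generalized safe attractor coincides with the safe
attractor). Then for every target set `T` with `λ > p v` for all `v ∈ V \ T`,
the set `S := SafeAttr(G, λ, T, σ)` satisfies `S = Attr(G, S, σ)`, and if
`V \ S ≠ ∅` then all maximum-priority vertices of `V \ S` belong to player σ. -/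
theorem genAttr_of_good {V : Type*} [Fintype V]
    (E : V → V → Prop) (hE : ∀ v, ∃ w, E v w) (p : V → ℤ) (P : Set V)
    (hP : P = {v | Even (p v)} ∨ P = {v | ¬ Even (p v)})
    (hGood : ∀ Y : Set V, Y.Nonempty → IsTrap E P Y → maxSet p Y ⊆ P)
    (T : Set V) (lam : ℤ) (hlam : ∀ v, v ∉ T → p v < lam) :
    safeAttr E P p lam T = attr E P (safeAttr E P p lam T) ∧
    ((safeAttr E P p lam T)ᶜ.Nonempty →
      maxSet p (safeAttr E P p lam T)ᶜ ⊆ P) :=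
  genAttr_of_good_general E p P hGood T lam hlam
end

section
/- For the family of parity games G_n (n even) consisting of two directed paths of n/2 vertices each with appropriate priorities as in the paper's Figure 2 construction, the Even-trap-depth of G_n is exactly n/2; in particular, for every k there exists a parity game with O(k) vertices and edges whose trap-depth is exactly k. -/
/-- In a parity game with priorities `p`, a set belongs to `R_σ` when all its
maximum-priority vertices have parity σ; here for σ = Even. -/
def REven {V : Type*} (p : V → ℤ) : Set (Set V) :=
  {S | maxSet p S ⊆ {v | Even (p v)}}

def ROdd {V : Type*} (p : V → ℤ) : Set (Set V) :=
  {S | maxSet p S ⊆ {v | ¬ Even (p v)}}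

/-!
The game has Even vertices `a_j` of priority `2j + 2` and Odd vertices `b_j` of priority
`2j + 1` for `j < k`, with edges `a_j → b_j` and `b_j → a_j, a_{j+1}, b_{j-1}`.

On a set closed under `a_j ↦ b_j`, Even can cut everything above its highest `a`-vertex `a_i`:
this is an Odd-trap with the even maximum `a_i`, and any legal Odd reply has an odd maximum
`b_l` with `l ≤ i`, so its `a`-vertices lie strictly below `a_i`. This wins for Even within
`k` rounds and shows that Odd can never win.

Conversely, the first `m` pairs have no Odd-trap but themselves, and Odd answers by removing
`a_{m-1}`; in the rest, `b_{m-1}` is an odd maximum, so Even's only legal move is again the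
first `m - 1` pairs. Each round thus removes exactly one pair.
-/

theorem IsTrap.restrict_of_subset {V : Type*} {E : V → V → Prop} {Q S S' X : Set V}
    (h : IsTrap (restrictE E S) (Q ∩ S) X) (hXS' : X ⊆ S') (hS' : S' ⊆ S) :
    IsTrap (restrictE E S') (Q ∩ S') X :=
  ⟨fun v hv hq w hw => h.1 v hv ⟨hq.1, hS' hq.2⟩ w ⟨hw.1, hS' hw.2.1, hS' hw.2.2⟩,
    fun v hv hq => by
      obtain ⟨w, hwX, hvw, -⟩ := h.2 v hv fun hq' => hq ⟨hq'.1, hXS' hv⟩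
      exact ⟨w, hwX, hvw, hXS' hv, hXS' hwX⟩⟩

theorem mem_maxSet_of_subset {V : Type*} {p : V → ℤ} {X Y : Set V} {v : V}
    (hv : v ∈ maxSet p Y) (hvX : v ∈ X) (hXY : X ⊆ Y) : v ∈ maxSet p X :=
  ⟨hvX, fun w hw => hv.2 w (hXY hw)⟩

theorem WinTD.of_succ_of_forced {V : Type*} {E : V → V → Prop} {P : Set V} {R : Set (Set V)}
    {j : ℕ} {S X₀ Y : Set V} (h : WinTD E P R (j + 1) S)
    (hforced : ∀ X : Set V, X.Nonempty → X ⊆ S → IsTrap (restrictE E S) (Pᶜ ∩ S) X → X ∈ R →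
      X = X₀)
    (hY : Y.Nonempty) (hYX : Y ⊆ X₀) (hYtrap : IsTrap (restrictE E X₀) (P ∩ X₀) Y)
    (hYR : Y ∉ R) : WinTD E P R j Y := by
  obtain ⟨X, hne, hXS, htrap, hR, hreply⟩ := h
  obtain rfl := hforced X hne hXS htrap hR
  exact (hreply Y hY hYX hYtrap).resolve_left hYR

namespace TwoPaths

/-- `(j, true)` is the Even vertex `a_j` and `(j, false)` the Odd vertex `b_j`. -/
abbrev Vertex (k : ℕ) := Fin k × Bool

variable {k : ℕ}

def edge : Vertex k → Vertex k → Prop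
  | (i, true), w => w = (i, false)
  | (i, false), (j, true) => j = i ∨ (i : ℕ) + 1 = j
  | (i, false), (j, false) => (j : ℕ) + 1 = i

def prio : Vertex k → ℤ
  | (j, true) => 2 * (j : ℕ) + 2
  | (j, false) => 2 * (j : ℕ) + 1

@[simp]
theorem even_prio (v : Vertex k) : Even (prio v) ↔ v.2 = true := by
  obtain ⟨j, _ | _⟩ := v <;> simp [prio, parity_simps]

theorem exists_edge (v : Vertex k) : ∃ w, edge v w := by
  obtain ⟨j, _ | _⟩ := v
  exacts [⟨(j, true), by simp [edge]⟩, ⟨(j, false), by simp [edge]⟩]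

theorem prio_injective : Function.Injective (prio : Vertex k → ℤ) := by
  rintro ⟨i, _ | _⟩ ⟨j, _ | _⟩ h <;> simp only [prio] at h <;>
    first | omega | simp [Fin.ext_iff]; omega

theorem card_edges_le : Nat.card {e : Vertex k × Vertex k // edge e.1 e.2} ≤ 8 * k := by
  classical
  have hinj : Function.Injective fun e : {e : Vertex k × Vertex k // edge e.1 e.2} =>
      (e.1.1, e.1.2.2, decide (e.1.2.1 = e.1.1.1)) := by
    rintro ⟨⟨⟨i, a⟩, ⟨j, b⟩⟩, h⟩ ⟨⟨⟨i', a'⟩, ⟨j', b'⟩⟩, h'⟩ he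
    simp only [Prod.mk.injEq, decide_eq_decide] at he
    obtain ⟨⟨rfl, rfl⟩, rfl, hj⟩ := he
    simp only [Subtype.mk.injEq, Prod.mk.injEq, true_and, and_true]
    cases a <;> cases b <;> simp only [edge, Prod.mk.injEq] at h h' <;>
      simp only [Fin.ext_iff] at * <;> omega
  calc Nat.card {e : Vertex k × Vertex k // edge e.1 e.2}
      ≤ Nat.card (Vertex k × Bool × Bool) := Nat.card_le_card_of_injective _ hinj
    _ = 8 * k := by simp [Vertex]; ring

def PairClosed (Y : Set (Vertex k)) : Prop :=
  ∀ j, (j, true) ∈ Y → (j, false) ∈ Y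

theorem PairClosed.of_isTrap {S Z : Set (Vertex k)} (hS : PairClosed S) (hZS : Z ⊆ S)
    (h : IsTrap (restrictE edge S) ({v | v.2 = true} ∩ S) Z) : PairClosed Z :=
  fun j hj => h.1 _ hj ⟨rfl, hZS hj⟩ _ ⟨by simp [edge], hZS hj, hS j (hZS hj)⟩

/-- Following edges out of Odd vertices only lowers the index until an `a`-vertex is reached. -/
theorem exists_true_mem_of_isTrap {S Z : Set (Vertex k)} (hne : Z.Nonempty)
    (h : IsTrap (restrictE edge S) ({v | v.2 = true} ∩ S) Z) : ∃ i, (i, true) ∈ Z := by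
  obtain ⟨⟨j, _ | _⟩, hj⟩ := hne
  swap
  · exact ⟨j, hj⟩
  induction j using WellFoundedLT.induction with
  | _ j ih =>
    obtain ⟨⟨i, _ | _⟩, hiZ, hji, -⟩ := h.2 _ hj fun hq => Bool.false_ne_true hq.1
    · exact ih i (by simp only [edge] at hji; omega) hiZ
    · exact ⟨i, hiZ⟩

def cutAt (Y : Set (Vertex k)) (i : Fin k) : Set (Vertex k) :=
  {v ∈ Y | v.1 ≤ i}

theorem PairClosed.cutAt {Y : Set (Vertex k)} (hY : PairClosed Y) (i : Fin k) :
    PairClosed (cutAt Y i) :=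
  fun j hj => ⟨hY j hj.1, hj.2⟩

theorem isTrap_cutAt {Y : Set (Vertex k)} {i : Fin k} (hY : PairClosed Y)
    (hmax : ∀ j, (j, true) ∈ Y → j ≤ i) :
    IsTrap (restrictE edge Y) ({v | v.2 = false} ∩ Y) (cutAt Y i) := by
  refine ⟨?_, ?_⟩
  · rintro ⟨j, b⟩ ⟨-, hji : j ≤ i⟩ ⟨rfl, -⟩ ⟨l, c⟩ ⟨hjl, -, hlY⟩
    refine ⟨hlY, ?_⟩
    cases c
    · simp only [edge] at hjl
      exact (show l ≤ j from Fin.le_def.2 (by omega)).trans hji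
    · exact hmax l hlY
  · rintro ⟨j, _ | _⟩ hj hq
    · exact absurd ⟨rfl, hj.1⟩ hq
    · exact ⟨(j, false), ⟨hY j hj.1, hj.2⟩, by simp [edge], hj.1, hY j hj.1⟩

theorem maxSet_cutAt {Y : Set (Vertex k)} {i : Fin k} (hi : (i, true) ∈ Y) :
    maxSet prio (cutAt Y i) = {(i, true)} := by
  have hle : ∀ v ∈ cutAt Y i, prio v ≤ prio (i, true) := by
    rintro ⟨j, _ | _⟩ ⟨-, hji : j ≤ i⟩ <;> simp only [prio] <;> rw [Fin.le_def] at hji <;> omega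
  ext v
  refine ⟨fun hv => prio_injective (le_antisymm (hle v hv.1) (hv.2 _ ⟨hi, le_rfl⟩)), ?_⟩
  rintro rfl
  exact ⟨⟨hi, le_rfl⟩, hle⟩

theorem exists_max_true_mem {Y : Set (Vertex k)} (h : ∃ j, (j, true) ∈ Y) :
    ∃ i, (i, true) ∈ Y ∧ ∀ j, (j, true) ∈ Y → j ≤ i :=
  Set.exists_max_image {j | (j, true) ∈ Y} id (Set.toFinite _) h

theorem winTD_even_of_pairClosed (m : ℕ) {Y : Set (Vertex k)} (hY : PairClosed Y)
    (ha : ∃ j, (j, true) ∈ Y) (hm : ∀ j, (j, true) ∈ Y → (j : ℕ) < m) :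
    WinTD edge {v | Even (prio v)} (REven prio) m Y := by
  induction m generalizing Y with
  | zero =>
    obtain ⟨j, hj⟩ := ha
    exact absurd (hm j hj) (Nat.not_lt_zero _)
  | succ m ih =>
    obtain ⟨i, hi, himax⟩ := exists_max_true_mem ha
    refine ⟨cutAt Y i, ⟨_, hi, le_rfl⟩, Set.sep_subset _ _, ?_, ?_, ?_⟩
    · simpa [Set.compl_ofPred] using isTrap_cutAt hY himax
    · simp [REven, maxSet_cutAt hi]
    intro Z hZ hZi hZtrap
    refine or_iff_not_imp_left.2 fun hZR => ?_
    obtain ⟨⟨l, c⟩, hlmax, hlodd⟩ := Set.not_subset.1 hZR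
    simp only [Set.mem_ofPred_eq, even_prio, Bool.not_eq_true] at hlodd
    subst hlodd
    simp only [even_prio] at hZtrap
    refine ih ((hY.cutAt i).of_isTrap hZi hZtrap) (exists_true_mem_of_isTrap hZ hZtrap) ?_
    -- the odd maximum `b_l` of `Z` has `l ≤ i`, so every `a_j ∈ Z` has `j < l ≤ i`
    intro j hj
    have hjl := hlmax.2 _ hj
    have hli : l ≤ i := (hZi hlmax.1).2
    have := hm i hi
    simp only [prio] at hjl
    rw [Fin.le_def] at hli
    omega

theorem not_winTD_odd_of_pairClosed (j : ℕ) {S : Set (Vertex k)} (hS : PairClosed S) :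
    ¬ WinTD edge {v | ¬ Even (prio v)} (ROdd prio) j S := by
  induction j generalizing S with
  | zero => exact id
  | succ j ih =>
    rintro ⟨X, hX, hXS, htrap, -, hreply⟩
    simp only [even_prio, Set.compl_ofPred, not_not] at htrap
    have hXc := hS.of_isTrap hXS htrap
    obtain ⟨i, hi, himax⟩ := exists_max_true_mem (exists_true_mem_of_isTrap hX htrap)
    rcases hreply (cutAt X i) ⟨_, hi, le_rfl⟩ (Set.sep_subset _ _)
        (by simpa using isTrap_cutAt hXc himax) with hR | hwin
    · simp [ROdd, maxSet_cutAt hi] at hR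
    · exact ih (hXc.cutAt i) hwin

def firstPairs (m : ℕ) : Set (Vertex k) :=
  {v | (v.1 : ℕ) < m}

def firstPairsB (m : ℕ) : Set (Vertex k) :=
  {v | (v.1 : ℕ) < m ∨ ((v.1 : ℕ) = m ∧ v.2 = false)}

theorem firstPairsB_subset (m : ℕ) : firstPairsB m ⊆ (firstPairs (m + 1) : Set (Vertex k)) := by
  rintro v (h | ⟨h, -⟩) <;> simp only [firstPairs, Set.mem_ofPred_eq] <;> omega

theorem univ_eq_firstPairsB : (Set.univ : Set (Vertex k)) = firstPairsB k := by
  ext v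
  simp [firstPairsB]

theorem b_mem_maxSet_firstPairsB {m : ℕ} (hm : m < k) :
    (⟨m, hm⟩, false) ∈ maxSet prio (firstPairsB m : Set (Vertex k)) := by
  refine ⟨Or.inr ⟨rfl, rfl⟩, ?_⟩
  rintro ⟨j, _ | _⟩ (h | ⟨h, h'⟩) <;> simp_all [prio] <;> omega

/-- In `G[firstPairs m]` every `b_j` is joined to `b_{j-1}` and, through `a_{j+1}`, to
`b_{j+1}`, so a nonempty Odd-trap contains all of it. -/
theorem eq_firstPairs_of_isTrap {m : ℕ} {X : Set (Vertex k)} (hX : X.Nonempty)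
    (hXS : X ⊆ firstPairs m)
    (h : IsTrap (restrictE edge (firstPairs m)) ({v | v.2 = false} ∩ firstPairs m) X) :
    X = firstPairs m := by
  have hab : ∀ j, (j, true) ∈ X → (j, false) ∈ X := by
    intro j hj
    obtain ⟨w, hwX, hjw, -⟩ := h.2 _ hj fun hq => Bool.noConfusion hq.1
    simp only [edge] at hjw
    exact hjw ▸ hwX
  have hba : ∀ j, (j, false) ∈ X → (j, true) ∈ X := by
    intro j hj
    have hjS : (j, false) ∈ firstPairs m := hXS hj
    exact h.1 _ hj ⟨rfl, hjS⟩ _ ⟨by simp [edge], hjS, hjS⟩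
  have hstep : ∀ i j : Fin k, (i : ℕ) + 1 = j → (j : ℕ) < m →
      ((i, false) ∈ X ↔ (j, false) ∈ X) := by
    intro i j hij hjm
    have hiS : (i, false) ∈ firstPairs m := by simp only [firstPairs, Set.mem_ofPred_eq]; omega
    have hjS : (j, false) ∈ firstPairs m := hjm
    refine ⟨fun hi => hab j (h.1 _ hi ⟨rfl, hiS⟩ _ ⟨?_, hiS, hjS⟩), fun hj =>
      h.1 _ hj ⟨rfl, hjS⟩ _ ⟨?_, hjS, hiS⟩⟩ <;> simp [edge, hij]
  obtain ⟨⟨j₀, b₀⟩, h₀⟩ := hX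
  obtain _ | k := k
  · exact j₀.elim0
  have hall : ∀ j : Fin (k + 1), (j : ℕ) < m → ((j, false) ∈ X ↔ (0, false) ∈ X) := by
    intro j
    induction j using Fin.induction with
    | zero => simp
    | succ i ih =>
      intro hi
      rw [← hstep i.castSucc i.succ (by simp) hi, ih (by simp at hi ⊢; omega)]
  have h₀' : (j₀, false) ∈ X := by
    cases b₀
    exacts [h₀, hab _ h₀]
  have h0 := (hall j₀ (hXS h₀')).1 h₀'
  refine hXS.antisymm ?_
  rintro ⟨j, _ | _⟩ hj
  · exact (hall j hj).2 h0
  · exact hba j ((hall j hj).2 h0)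

theorem eq_firstPairs_of_isTrap_mem_REven {m : ℕ} {X : Set (Vertex k)} (hX : X.Nonempty)
    (hXS : X ⊆ firstPairsB m)
    (h : IsTrap (restrictE edge (firstPairsB m)) ({v | v.2 = false} ∩ firstPairsB m) X)
    (hR : X ∈ REven prio) : X = firstPairs m := by
  have hXS' : X ⊆ firstPairs m := by
    rintro ⟨j, b⟩ hj
    rcases hXS hj with hjm | ⟨rfl, rfl⟩
    · exact hjm
    · have := hR (mem_maxSet_of_subset (b_mem_maxSet_firstPairsB j.isLt) hj hXS)
      simp at this
  exact eq_firstPairs_of_isTrap hX hXS' (h.restrict_of_subset hXS' fun v hv => Or.inl hv)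

theorem isTrap_firstPairsB {m : ℕ} (hm : 0 < m) :
    IsTrap (restrictE edge (firstPairs (m + 1))) ({v | v.2 = true} ∩ firstPairs (m + 1))
      (firstPairsB m : Set (Vertex k)) := by
  refine ⟨?_, ?_⟩
  · rintro ⟨j, b⟩ (hj | ⟨-, hb⟩) ⟨rfl, -⟩ w ⟨hjw, -⟩
    · simp only [edge] at hjw
      subst hjw
      exact Or.inl hj
    · simp at hb
  · rintro ⟨j, _ | _⟩ hj hq
    · have hjS := firstPairsB_subset m hj
      rcases hj with hj | ⟨hj, -⟩ <;> dsimp only at hj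
      · exact ⟨(j, true), Or.inl hj, by simp [edge], hjS, hjS⟩
      · refine ⟨(⟨j - 1, by omega⟩, false), Or.inl (by dsimp only; omega), ?_, hjS, ?_⟩
        · simp only [edge]
          omega
        · simp only [firstPairs, Set.mem_ofPred_eq]
          omega
    · exact absurd ⟨rfl, firstPairsB_subset m hj⟩ hq

theorem not_winTD_even_firstPairsB (j : ℕ) {m : ℕ} (hjm : j < m) (hmk : m ≤ k) :
    ¬ WinTD edge {v | Even (prio v)} (REven prio) j (firstPairsB m : Set (Vertex k)) := by
  induction j generalizing m with
  | zero => exact id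
  | succ j ih =>
    intro hwin
    obtain ⟨m, rfl⟩ : ∃ m', m = m' + 1 := ⟨m - 1, by omega⟩
    have hm : m < k := by omega
    refine ih (m := m) (by omega) hm.le (hwin.of_succ_of_forced ?_
      ⟨_, (b_mem_maxSet_firstPairsB hm).1⟩ (firstPairsB_subset m)
      (by simpa using isTrap_firstPairsB (k := k) (by omega : 0 < m)) ?_)
    · intro X hX hXS htrap hR
      exact eq_firstPairs_of_isTrap_mem_REven hX hXS (by simpa [Set.compl_ofPred] using htrap) hR
    · intro hR
      simpa using hR (b_mem_maxSet_firstPairsB hm)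

end TwoPaths

/-- The Figure 2 construction: for every `k > 0` there is a parity game `G` on
`2k` vertices (two directed paths of `k` vertices each) with `O(k)` edges whose
Even-trap-depth is exactly `k`: Even, moving first, can win the trap-depth game
within `k` rounds but not within fewer, and Odd cannot win it (moving first)
within fewer than `k` rounds either; in particular the trap-depth of `G` is
exactly `k`. -/
theorem exists_parityGame_with_trapDepth (k : ℕ) (hk : 0 < k) :
    ∃ (V : Type) (_ : Fintype V) (E : V → V → Prop) (p : V → ℤ),
      (∀ v, ∃ w, E v w) ∧
      Fintype.card V = 2 * k ∧
      Nat.card {e : V × V // E e.1 e.2} ≤ 10 * k ∧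
      WinTD E {v | Even (p v)} (REven p) k Set.univ ∧
      (∀ j < k, ¬ WinTD E {v | Even (p v)} (REven p) j Set.univ) ∧
      (∀ j < k, ¬ WinTD E {v | ¬ Even (p v)} (ROdd p) j Set.univ) := by
  refine ⟨TwoPaths.Vertex k, inferInstance, TwoPaths.edge, TwoPaths.prio, TwoPaths.exists_edge,
    by simp [mul_comm], TwoPaths.card_edges_le.trans (by omega), ?_, fun j hj => ?_,
    fun j _ => ?_⟩
  · exact TwoPaths.winTD_even_of_pairClosed k (fun _ _ => trivial) ⟨⟨0, hk⟩, trivial⟩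
      fun j _ => j.isLt
  · rw [TwoPaths.univ_eq_firstPairsB]
    exact TwoPaths.not_winTD_even_firstPairsB j hj le_rfl
  · exact TwoPaths.not_winTD_odd_of_pairClosed j fun _ _ => trivial
end
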